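/- For n ≥ 3, α(H_n) + α(L(H_n)) = 2n + 1 and α(H_n) · α(L(H_n)) = n(n + 1), where H_n is the helm graph. -/

import Mathlib

/-!
The hub and the `n` pendant vertices of `H_n` form an independent set, and no independent set
is larger: it meets each of the `n + 1` cliques `{hub}`, `{vᵢ, pᵢ}` (cycle vertex and its
pendant) at most once. So `α(H_n) = n + 1`. An independent set of `L(H_n)` is a matching, whose
edges cover twice as many of the `2n + 1` vertices as there are edges, so it has at most `n`
edges; the `n` pendant edges attain this. Hence `α(L(H_n)) = n`.
-/

open SimpleGraph

/-- The independence number of a graph: the maximum cardinality of a set of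
pairwise non-adjacent vertices. -/
noncomputable def indepNum {V : Type*} (G : SimpleGraph V) : ℕ :=
  sSup {k | ∃ s : Set V, s.Pairwise (fun a b => ¬ G.Adj a b) ∧ s.ncard = k}

/-- The matching number of a graph: the maximum cardinality of a set of edges of
the graph, no two of which share an endpoint. -/
noncomputable def matchNum {V : Type*} (G : SimpleGraph V) : ℕ :=
  sSup {k | ∃ M : Set (Sym2 V), M ⊆ G.edgeSet ∧
    (M.Pairwise fun e f => ∀ v : V, ¬(v ∈ e ∧ v ∈ f)) ∧ M.ncard = k}

/-- The helm graph `H_n`: obtained from the wheel `W_{n+1}` by attaching one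
pendant vertex to each cycle vertex.  Here `none` is the hub, `some (Sum.inl i)`
is the `i`-th cycle vertex and `some (Sum.inr i)` is the pendant vertex attached
to the `i`-th cycle vertex. -/
def helmGraph (n : ℕ) : SimpleGraph (Option (Fin n ⊕ Fin n)) :=
  SimpleGraph.fromRel fun x y =>
    match x, y with
    | none, some (Sum.inl _) => True
    | some (Sum.inl a), some (Sum.inl b) => (cycleGraph n).Adj a b
    | some (Sum.inl a), some (Sum.inr b) => a = b
    | _, _ => False

section General

variable {V W : Type*} {G : SimpleGraph V}

lemma indepNum_eq_ncard {s : Set V} (hs : G.IsIndepSet s)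
    (hmax : ∀ t, G.IsIndepSet t → t.ncard ≤ s.ncard) : _root_.indepNum G = s.ncard :=
  IsGreatest.csSup_eq ⟨⟨s, hs, rfl⟩, by rintro _ ⟨t, ht, rfl⟩; exact hmax t ht⟩

lemma SimpleGraph.IsIndepSet.ncard_le_of_isClique_fibers [Finite W] {s : Set V}
    (hs : G.IsIndepSet s) (f : V → W) (hf : ∀ w, G.IsClique (f ⁻¹' {w})) :
    s.ncard ≤ Nat.card W := by
  have hinj : s.InjOn f := fun x hx y hy hxy ↦
    by_contra fun hne ↦ hs hx hy hne (hf (f y) hxy rfl hne)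
  calc s.ncard = (f '' s).ncard := hinj.ncard_image.symm
    _ ≤ Nat.card W := Set.ncard_le_card _

lemma two_mul_ncard_le_card_of_isIndepSet_lineGraph [Finite V] {s : Set G.edgeSet}
    (hs : G.lineGraph.IsIndepSet s) : 2 * s.ncard ≤ Nat.card V := by
  classical
  have := Fintype.ofFinite V
  let ends : G.edgeSet → Finset V := fun e ↦ (e : Sym2 V).toFinset
  have hdisj : (s : Set G.edgeSet).PairwiseDisjoint ends := by
    intro e he f hf hef
    rw [Function.onFun, Finset.disjoint_left]
    intro v hve hvf
    exact hs he hf hef ⟨hef, v, by simpa [ends] using hve, by simpa [ends] using hvf⟩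
  have hcard : ∀ e : G.edgeSet, (ends e).card = 2 := fun e ↦
    Sym2.card_toFinset_of_not_isDiag _ (G.not_isDiag_of_mem_edgeSet e.2)
  calc 2 * s.ncard = ∑ e ∈ s.toFinset, (ends e).card := by
        simp [hcard, Set.ncard_eq_toFinset_card', mul_comm]
    _ = (s.toFinset.biUnion ends).card := (Finset.card_biUnion (by simpa using hdisj)).symm
    _ ≤ Nat.card V := by rw [Nat.card_eq_fintype_card]; exact Finset.card_le_univ _

end General

lemma helmGraph_isClique_fibers (n : ℕ) (w : Option (Fin n)) :
    (helmGraph n).IsClique (Option.map (Sum.elim id id) ⁻¹' {w}) := by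
  rintro (_ | i | i) hx (_ | j | j) hy hne <;> subst hy <;> simp_all [helmGraph]

lemma helmGraph_isIndepSet_hub_pendants (n : ℕ) :
    (helmGraph n).IsIndepSet (Set.range (Option.map (Sum.inr : Fin n → Fin n ⊕ Fin n))) := by
  rintro _ ⟨_ | i, rfl⟩ _ ⟨_ | j, rfl⟩ <;> simp [helmGraph]

lemma indepNum_helmGraph (n : ℕ) : _root_.indepNum (helmGraph n) = n + 1 := by
  have hcard : (Set.range (Option.map (Sum.inr : Fin n → Fin n ⊕ Fin n))).ncard = n + 1 := by
    rw [← Nat.card_coe_set_eq, Nat.card_range_of_injective (Option.map_injective Sum.inr_injective)]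
    simp
  refine (indepNum_eq_ncard (helmGraph_isIndepSet_hub_pendants n) fun t ht ↦ ?_).trans hcard
  simpa [hcard] using ht.ncard_le_of_isClique_fibers _ (helmGraph_isClique_fibers n)

def helmPendantEdge (n : ℕ) (i : Fin n) : (helmGraph n).edgeSet :=
  ⟨s(some (Sum.inl i), some (Sum.inr i)), by simp [helmGraph]⟩

lemma helmPendantEdge_injective (n : ℕ) : Function.Injective (helmPendantEdge n) := by
  intro i j h
  simpa [helmPendantEdge] using congrArg Subtype.val h

lemma helmGraph_lineGraph_isIndepSet_pendantEdges (n : ℕ) :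
    (helmGraph n).lineGraph.IsIndepSet (Set.range (helmPendantEdge n)) := by
  rintro _ ⟨i, rfl⟩ _ ⟨j, rfl⟩ hne hadj
  obtain ⟨-, v, hvi, hvj⟩ := lineGraph_adj_iff_exists.mp hadj
  have hij : i ≠ j := fun h ↦ hne (h ▸ rfl)
  simp only [helmPendantEdge, Sym2.mem_iff] at hvi hvj
  rcases hvi with rfl | rfl <;> simp_all

lemma indepNum_lineGraph_helmGraph (n : ℕ) : _root_.indepNum (helmGraph n).lineGraph = n := by
  have hcard : (Set.range (helmPendantEdge n)).ncard = n := by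
    rw [← Nat.card_coe_set_eq, Nat.card_range_of_injective (helmPendantEdge_injective n)]
    simp
  refine (indepNum_eq_ncard (helmGraph_lineGraph_isIndepSet_pendantEdges n) fun t ht ↦ ?_).trans
    hcard
  have h := two_mul_ncard_le_card_of_isIndepSet_lineGraph ht
  simp only [Nat.card_eq_fintype_card, Fintype.card_option, Fintype.card_sum, Fintype.card_fin] at h
  omega

theorem helm_indepNum_add_mul_indepNum_lineGraph_general (n : ℕ) :
    _root_.indepNum (helmGraph n) + _root_.indepNum (helmGraph n).lineGraph = 2 * n + 1 ∧
    _root_.indepNum (helmGraph n) * _root_.indepNum (helmGraph n).lineGraph = n * (n + 1) := by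
  rw [indepNum_helmGraph, indepNum_lineGraph_helmGraph]
  constructor <;> ring

/-- For `n ≥ 3`, `α(H_n) + α(L(H_n)) = 2n + 1` and `α(H_n) · α(L(H_n)) = n(n+1)`. -/
theorem helm_indepNum_add_mul_indepNum_lineGraph (n : ℕ) (hn : 3 ≤ n) :
    _root_.indepNum (helmGraph n) + _root_.indepNum (helmGraph n).lineGraph = 2 * n + 1 ∧
    _root_.indepNum (helmGraph n) * _root_.indepNum (helmGraph n).lineGraph = n * (n + 1) :=
  helm_indepNum_add_mul_indepNum_lineGraph_general n
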